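/- arXiv:2509.15332 — 2 statements merged into one kernel-verified Lean document; each statement's English description precedes it below -/
import Mathlib

section
/- Let 𝔽_q be a finite field of odd characteristic with ε a nonsquare. The number of t ∈ 𝔽_q for which −3(t²/4 − 1/ε) is a nonzero square in 𝔽_q equals (q−μ)/2, where q ≡ μ mod 3, μ ∈ {±1}. (Note t²/4 − 1/ε ≠ 0 for all t ∈ 𝔽_q since 1/ε is a nonsquare.) -/
open Finset

private lemma ringChar_ne_two {F : Type*} [Field F] [Fintype F] (h2 : (2 : F) ≠ 0) :
    ringChar F ≠ 2 := by
  intro h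
  apply h2
  have := ringChar.Nat.cast_ringChar (R := F)
  rw [h] at this
  exact_mod_cast this

/-- Key character sum: `∑ t, χ(t² + c) = -1` for `c ≠ 0`. -/
private lemma sum_quadChar_sq_add {F : Type*} [Field F] [Fintype F] [DecidableEq F]
    (hF : ringChar F ≠ 2) {c : F} (hc : c ≠ 0) :
    ∑ t : F, quadraticChar F (t ^ 2 + c) = -1 := by
  have key : ∑ t : F, quadraticChar F (t ^ 2 + c)
      = ∑ s : F, (quadraticChar F s + 1) * quadraticChar F (s + c) := by
    rw [← Finset.sum_fiberwise' univ (fun t : F => t ^ 2) (fun s => quadraticChar F (s + c))]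
    refine Finset.sum_congr rfl fun s _ => ?_
    rw [Finset.sum_const, ← quadraticChar_card_sqrts hF s]
    have : {x : F | x ^ 2 = s}.toFinset = univ.filter (fun t : F => t ^ 2 = s) := by
      simp [Set.toFinset_setOf]
    rw [this]
    simp [nsmul_eq_mul, mul_comm]
  rw [key]
  have expand : ∀ s : F, (quadraticChar F s + 1) * quadraticChar F (s + c)
      = quadraticChar F (s * (s + c)) + quadraticChar F (s + c) := by
    intro s; rw [map_mul]; ring
  simp only [expand]
  rw [Finset.sum_add_distrib]
  have h1 : ∑ s : F, quadraticChar F (s + c) = 0 := by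
    rw [← quadraticChar_sum_zero hF]
    exact Fintype.sum_equiv (Equiv.addRight c) _ _ (fun s => rfl)
  have h2 : ∑ s : F, quadraticChar F (s * (s + c)) = -1 := by
    rw [← Finset.sum_filter_add_sum_filter_not univ (fun s : F => s = 0)]
    have e0 : ∑ s ∈ univ.filter (fun s : F => s = 0), quadraticChar F (s * (s + c)) = 0 := by
      rw [Finset.filter_eq']
      simp
    rw [e0, zero_add]
    -- on nonzero s, s*(s+c) = s² * (1 + c * s⁻¹)
    have e1 : ∀ s ∈ univ.filter (fun s : F => ¬ s = 0),
        quadraticChar F (s * (s + c)) = quadraticChar F (1 + c * s⁻¹) := by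
      intro s hs
      rw [Finset.mem_filter] at hs
      have hs0 : s ≠ 0 := hs.2
      have : s * (s + c) = s ^ 2 * (1 + c * s⁻¹) := by
        field_simp
      rw [this, map_mul, quadraticChar_sq_one' hs0, one_mul]
    rw [Finset.sum_congr rfl e1]
    -- bijection s ↦ 1 + c * s⁻¹ from F \ {0} to F \ {1}
    have := Finset.sum_nbij' (i := fun s : F => 1 + c * s⁻¹)
      (j := fun v : F => c * (v - 1)⁻¹)
      (s := univ.filter (fun s : F => ¬ s = 0))
      (t := univ.filter (fun v : F => ¬ v = 1))
      (f := fun s => quadraticChar F (1 + c * s⁻¹))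
      (g := fun v => quadraticChar F v)
      (by
        intro a ha
        rw [Finset.mem_filter] at ha ⊢
        refine ⟨Finset.mem_univ _, fun h => ?_⟩
        have : c * a⁻¹ = 0 := by linear_combination h
        rcases mul_eq_zero.mp this with h' | h'
        · exact hc h'
        · exact ha.2 (inv_eq_zero.mp h'))
      (by
        intro v hv
        rw [Finset.mem_filter] at hv ⊢
        refine ⟨Finset.mem_univ _, fun h => ?_⟩
        have hv1 : v - 1 ≠ 0 := sub_ne_zero.mpr hv.2
        rcases mul_eq_zero.mp h with h' | h'
        · exact hc h'
        · exact hv1 (inv_eq_zero.mp h'))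
      (by
        intro a ha
        rw [Finset.mem_filter] at ha
        have ha0 : a ≠ 0 := ha.2
        show c * (1 + c * a⁻¹ - 1)⁻¹ = a
        have h' : 1 + c * a⁻¹ - 1 = c * a⁻¹ := by ring
        rw [h', mul_inv, inv_inv, ← mul_assoc, mul_inv_cancel₀ hc, one_mul])
      (by
        intro v hv
        rw [Finset.mem_filter] at hv
        have hv1 : v - 1 ≠ 0 := sub_ne_zero.mpr hv.2
        show 1 + c * (c * (v - 1)⁻¹)⁻¹ = v
        rw [mul_inv, inv_inv, ← mul_assoc, mul_inv_cancel₀ hc, one_mul]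
        ring)
      (fun a _ => rfl)
    rw [this]
    have : ∑ v ∈ univ.filter (fun v : F => ¬ v = 1), quadraticChar F v
        = (∑ v : F, quadraticChar F v) - quadraticChar F 1 := by
      rw [← Finset.sum_filter_add_sum_filter_not univ (fun v : F => v = 1)]
      rw [Finset.filter_eq']
      simp
    rw [this, quadraticChar_sum_zero hF]
    simp
  rw [h1, h2, add_zero]

/-- `-3` is a square iff `3 ∣ q - 1`. -/
private lemma isSquare_neg_three_iff {F : Type*} [Field F] [Fintype F]
    (h2 : (2 : F) ≠ 0) (h3 : (3 : F) ≠ 0) :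
    IsSquare (-3 : F) ↔ (3 : ℕ) ∣ (Fintype.card F - 1) := by
  constructor
  · rintro ⟨s, hs⟩
    set ω : F := (s - 1) / 2 with hω
    have hsq : s * s = -3 := hs.symm
    have hsum : ω ^ 2 + ω + 1 = 0 := by
      rw [hω]
      field_simp
      linear_combination hsq
    have hω1 : ω ≠ 1 := by
      intro h
      rw [h] at hsum
      have : (3 : F) = 0 := by linear_combination hsum
      exact h3 this
    have hω3 : ω ^ 3 = 1 := by
      have : ω ^ 3 - 1 = (ω - 1) * (ω ^ 2 + ω + 1) := by ring
      have h0 : ω ^ 3 - 1 = 0 := by rw [this, hsum, mul_zero]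
      exact sub_eq_zero.mp h0
    have hd : orderOf ω ∣ 3 := orderOf_dvd_of_pow_eq_one hω3
    have hne1 : orderOf ω ≠ 1 := fun h => hω1 (orderOf_eq_one_iff.mp h)
    have ho : orderOf ω = 3 :=
      (Nat.Prime.eq_one_or_self_of_dvd Nat.prime_three _ hd).resolve_left hne1
    have hω0 : ω ≠ 0 := by
      intro h
      rw [h] at hω3
      simp at hω3
    have : orderOf ω ∣ Fintype.card F - 1 :=
      orderOf_dvd_of_pow_eq_one (FiniteField.pow_card_sub_one_eq_one ω hω0)
    rwa [ho] at this
  · intro hdvd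
    classical
    haveI : Fact (Nat.Prime 3) := ⟨Nat.prime_three⟩
    have hcard : (3 : ℕ) ∣ Fintype.card Fˣ := by
      rwa [Fintype.card_units]
    obtain ⟨u, hu⟩ := exists_prime_orderOf_dvd_card 3 hcard
    set ω : F := (u : F) with hωdef
    have hω3 : ω ^ 3 = 1 := by
      have : u ^ 3 = 1 := by
        rw [← hu]; exact pow_orderOf_eq_one u
      calc ω ^ 3 = ((u ^ 3 : Fˣ) : F) := by push_cast [hωdef]; ring
        _ = 1 := by rw [this]; rfl
    have hω1 : ω ≠ 1 := by
      intro h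
      have : u = 1 := Units.ext h
      rw [this] at hu
      simp at hu
    have hsum : ω ^ 2 + ω + 1 = 0 := by
      have hfac : (ω - 1) * (ω ^ 2 + ω + 1) = 0 := by
        have : (ω - 1) * (ω ^ 2 + ω + 1) = ω ^ 3 - 1 := by ring
        rw [this, hω3, sub_self]
      rcases mul_eq_zero.mp hfac with h | h
      · exact absurd (sub_eq_zero.mp h) hω1
      · exact h
    exact ⟨2 * ω + 1, by linear_combination (-4 : F) * hsum⟩

theorem count_nonzero_square_values {F : Type*} [Field F] [Fintype F]
    (h2 : (2 : F) ≠ 0) (h3 : (3 : F) ≠ 0)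
    (ε : F) (hε : ¬ IsSquare ε)
    (μ : ℤ) (hμ : μ = 1 ∨ μ = -1)
    (hqμ : (Fintype.card F : ℤ) ≡ μ [ZMOD 3]) :
    (∀ t : F, t ^ 2 / 4 - 1 / ε ≠ 0) ∧
    2 * (Set.ncard {t : F |
        ∃ u : F, u ≠ 0 ∧ -3 * (t ^ 2 / 4 - 1 / ε) = u ^ 2} : ℤ) =
      Fintype.card F - μ := by
  classical
  have hF2 : ringChar F ≠ 2 := ringChar_ne_two h2
  have hε0 : ε ≠ 0 := fun h => hε (h ▸ ⟨0, by simp⟩)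
  have h4 : (4 : F) ≠ 0 := by
    have h44 : (4 : F) = 2 * 2 := by norm_num
    rw [h44]; exact mul_ne_zero h2 h2
  have hn3 : (-3 : F) ≠ 0 := neg_ne_zero.mpr h3
  -- Part 1
  have part1 : ∀ t : F, t ^ 2 / 4 - 1 / ε ≠ 0 := by
    intro t h
    have key : ε * t ^ 2 = 4 := by
      field_simp at h
      linear_combination h
    have ht : t ≠ 0 := by
      intro h0
      rw [h0] at key
      simp at key
      exact h4 key.symm
    apply hε
    refine ⟨2 / t, ?_⟩
    rw [div_mul_div_comm, eq_div_iff (mul_ne_zero ht ht)]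
    linear_combination key
  set g : F → F := fun t => -3 * (t ^ 2 / 4 - 1 / ε) with hg
  have hg0 : ∀ t : F, g t ≠ 0 := fun t => mul_ne_zero hn3 (part1 t)
  -- the set is the squares set
  have hset : {t : F | ∃ u : F, u ≠ 0 ∧ -3 * (t ^ 2 / 4 - 1 / ε) = u ^ 2}
      = ↑(univ.filter fun t : F => IsSquare (g t)) := by
    ext t
    simp only [Set.mem_setOf_eq, coe_filter, mem_univ, true_and, Set.mem_setOf_eq]
    constructor
    · rintro ⟨u, -, hu2⟩
      exact ⟨u, by rw [show g t = -3 * (t ^ 2 / 4 - 1 / ε) from rfl, hu2]; ring⟩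
    · rintro ⟨u, hu⟩
      have hgt : g t = u ^ 2 := by rw [hu]; ring
      have hu0 : u ≠ 0 := by
        intro h0
        rw [h0] at hgt
        exact hg0 t (by rw [hgt]; norm_num)
      exact ⟨u, hu0, hgt⟩
  rw [hset, Set.ncard_coe_finset]
  set N : ℕ := (univ.filter fun t : F => IsSquare (g t)).card with hN
  -- character sum equals 2N - q
  have hsum1 : ∑ t : F, quadraticChar F (g t) = 2 * (N : ℤ) - Fintype.card F := by
    rw [← Finset.sum_filter_add_sum_filter_not univ (fun t : F => IsSquare (g t))]
    have hA : ∑ t ∈ univ.filter (fun t : F => IsSquare (g t)), quadraticChar F (g t)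
        = (N : ℤ) := by
      rw [Finset.sum_congr rfl (fun t ht => ?_), Finset.sum_const, hN, nsmul_eq_mul, mul_one]
      exact (quadraticChar_one_iff_isSquare (hg0 t)).mpr (Finset.mem_filter.mp ht).2
    have hB : ∑ t ∈ univ.filter (fun t : F => ¬ IsSquare (g t)), quadraticChar F (g t)
        = -(((univ.filter fun t : F => ¬ IsSquare (g t)).card : ℤ)) := by
      rw [Finset.sum_congr rfl (fun t ht => ?_), Finset.sum_const, nsmul_eq_mul, mul_neg_one]
      exact quadraticChar_neg_one_iff_not_isSquare.mpr (Finset.mem_filter.mp ht).2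
    have hcards : N + (univ.filter fun t : F => ¬ IsSquare (g t)).card = Fintype.card F := by
      rw [hN, Finset.card_filter_add_card_filter_not]
      exact Finset.card_univ
    rw [hA, hB]
    push_cast [← hcards]
    ring
  -- quadratic character of -3 is μ
  have hq1 : 1 ≤ Fintype.card F := Fintype.card_pos
  have hdvd_iff : ((3 : ℤ) ∣ ((Fintype.card F : ℤ) - 1)) ↔ (3 : ℕ) ∣ (Fintype.card F - 1) := by
    have hcast : ((Fintype.card F - 1 : ℕ) : ℤ) = (Fintype.card F : ℤ) - 1 := by
      push_cast [Nat.cast_sub hq1]; ring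
    constructor
    · intro h
      rw [← hcast] at h
      exact_mod_cast h
    · intro h
      rw [← hcast]
      exact_mod_cast h
  have hchi3 : quadraticChar F (-3) = μ := by
    rcases hμ with hμ1 | hμ1
    · subst hμ1
      have hd : (3 : ℤ) ∣ ((Fintype.card F : ℤ) - 1) := Int.ModEq.dvd hqμ.symm
      have : IsSquare (-3 : F) := (isSquare_neg_three_iff h2 h3).mpr (hdvd_iff.mp hd)
      exact (quadraticChar_one_iff_isSquare hn3).mpr this
    · subst hμ1
      have hns : ¬ IsSquare (-3 : F) := by
        intro hsq
        have hd : (3 : ℤ) ∣ ((Fintype.card F : ℤ) - 1) :=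
          hdvd_iff.mpr ((isSquare_neg_three_iff h2 h3).mp hsq)
        have hd2 : (3 : ℤ) ∣ ((-1 : ℤ) - (Fintype.card F : ℤ)) := Int.ModEq.dvd hqμ
        omega
      exact quadraticChar_neg_one_iff_not_isSquare.mpr hns
  -- character sum equals -μ
  have hc' : (-4 / ε : F) ≠ 0 := div_ne_zero (neg_ne_zero.mpr h4) hε0
  have hsum2 : ∑ t : F, quadraticChar F (g t) = -μ := by
    have hfac : ∀ t : F, quadraticChar F (g t)
        = quadraticChar F (-3) * quadraticChar F (t ^ 2 + (-4 / ε)) := by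
      intro t
      have hrw : g t = (-3) * ((2⁻¹ : F) ^ 2 * (t ^ 2 + (-4 / ε))) := by
        show -3 * (t ^ 2 / 4 - 1 / ε) = _
        field_simp
        ring
      rw [hrw, map_mul, map_mul, quadraticChar_sq_one' (inv_ne_zero h2), one_mul]
    rw [Finset.sum_congr rfl (fun t _ => hfac t), ← Finset.mul_sum,
      sum_quadChar_sq_add hF2 hc', hchi3]
    ring
  rw [hsum2] at hsum1
  exact ⟨part1, by linarith⟩
end

section
/- Let 𝔽_q be a finite field with char(𝔽_q) ≠ 2, 3, and let I, J, z₅ ∈ 𝔽_q with z₅² = I and I³ ≠ J². Set g₂ = 3z₅J + (15/4)I² and g₃ = −(11I³ + 2J² + 14z₅JI)/8, and let E be the projective curve T²U = 4S³ − g₂SU² − g₃U³. Then E is smooth (its discriminant g₂³ − 27g₃² is nonzero) and the number of 𝔽_q-rational points of E is divisible by 3. -/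
open WeierstrassCurve WeierstrassCurve.Affine WeierstrassCurve.Affine.Point

/-- The Weierstrass curve `y² = x³ - (g₂/4)x - g₃/4`. -/
def auxW {F : Type*} [Field F] (g2 g3 : F) : WeierstrassCurve.Affine F :=
  ⟨0, 0, 0, -g2 / 4, -g3 / 4⟩

@[simp] lemma auxW_a₁ {F : Type*} [Field F] (g2 g3 : F) : (auxW g2 g3).a₁ = 0 := rfl
@[simp] lemma auxW_a₂ {F : Type*} [Field F] (g2 g3 : F) : (auxW g2 g3).a₂ = 0 := rfl
@[simp] lemma auxW_a₃ {F : Type*} [Field F] (g2 g3 : F) : (auxW g2 g3).a₃ = 0 := rfl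
@[simp] lemma auxW_a₄ {F : Type*} [Field F] (g2 g3 : F) : (auxW g2 g3).a₄ = -g2 / 4 := rfl
@[simp] lemma auxW_a₆ {F : Type*} [Field F] (g2 g3 : F) : (auxW g2 g3).a₆ = -g3 / 4 := rfl

lemma auxW_some_congr {F : Type*} [Field F] {W : WeierstrassCurve.Affine F}
    {x y x' y' : F} {h : W.Nonsingular x y} {h' : W.Nonsingular x' y'}
    (hx : x = x') (hy : y = y') : Point.some _ _ h = Point.some _ _ h' := by
  subst hx; subst hy; rfl

set_option maxHeartbeats 2000000 in
lemma auxW_main {F : Type*} [Field F] [Fintype F]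
    (h2 : (2 : F) ≠ 0) (h3 : (3 : F) ≠ 0)
    (J z5 g2 g3 : F) (hΔ : (z5 ^ 2) ^ 3 ≠ J ^ 2)
    (hg2 : g2 = 3 * z5 * J + (15 / 4) * (z5 ^ 2) ^ 2)
    (hg3 : g3 = -(11 * (z5 ^ 2) ^ 3 + 2 * J ^ 2 + 14 * z5 * J * z5 ^ 2) / 8) :
    g2 ^ 3 - 27 * g3 ^ 2 ≠ 0 ∧
    3 ∣ 1 + Set.ncard {p : F × F | p.2 ^ 2 = 4 * p.1 ^ 3 - g2 * p.1 - g3} := by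
  classical
  have hpow : ∀ n : ℕ, ((2 : F) ^ n) ≠ 0 := fun n => pow_ne_zero n h2
  have h4 : (4 : F) ≠ 0 := by rw [show (4 : F) = 2 ^ 2 by norm_num]; exact hpow 2
  have h8 : (8 : F) ≠ 0 := by rw [show (8 : F) = 2 ^ 3 by norm_num]; exact hpow 3
  have h16 : (16 : F) ≠ 0 := by rw [show (16 : F) = 2 ^ 4 by norm_num]; exact hpow 4
  have h32 : (32 : F) ≠ 0 := by rw [show (32 : F) = 2 ^ 5 by norm_num]; exact hpow 5
  have h64 : (64 : F) ≠ 0 := by rw [show (64 : F) = 2 ^ 6 by norm_num]; exact hpow 6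
  have h128 : (128 : F) ≠ 0 := by rw [show (128 : F) = 2 ^ 7 by norm_num]; exact hpow 7
  have h256 : (256 : F) ≠ 0 := by rw [show (256 : F) = 2 ^ 8 by norm_num]; exact hpow 8
  have h512 : (512 : F) ≠ 0 := by rw [show (512 : F) = 2 ^ 9 by norm_num]; exact hpow 9
  have h1024 : (1024 : F) ≠ 0 := by rw [show (1024 : F) = 2 ^ 10 by norm_num]; exact hpow 10
  have h2048 : (2048 : F) ≠ 0 := by rw [show (2048 : F) = 2 ^ 11 by norm_num]; exact hpow 11
  have h4096 : (4096 : F) ≠ 0 := by rw [show (4096 : F) = 2 ^ 12 by norm_num]; exact hpow 12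
  have h8192 : (8192 : F) ≠ 0 := by rw [show (8192 : F) = 2 ^ 13 by norm_num]; exact hpow 13
  have h16384 : (16384 : F) ≠ 0 := by
    rw [show (16384 : F) = 2 ^ 14 by norm_num]; exact hpow 14
  have h32768 : (32768 : F) ≠ 0 := by
    rw [show (32768 : F) = 2 ^ 15 by norm_num]; exact hpow 15
  have h65536 : (65536 : F) ≠ 0 := by
    rw [show (65536 : F) = 2 ^ 16 by norm_num]; exact hpow 16
  have h131072 : (131072 : F) ≠ 0 := by
    rw [show (131072 : F) = 2 ^ 17 by norm_num]; exact hpow 17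
  have h262144 : (262144 : F) ≠ 0 := by
    rw [show (262144 : F) = 2 ^ 18 by norm_num]; exact hpow 18
  have h524288 : (524288 : F) ≠ 0 := by
    rw [show (524288 : F) = 2 ^ 19 by norm_num]; exact hpow 19
  have h1048576 : (1048576 : F) ≠ 0 := by
    rw [show (1048576 : F) = 2 ^ 20 by norm_num]; exact hpow 20
  have h27 : (27 : F) ≠ 0 := by
    rw [show (27 : F) = 3 * (3 * 3) by norm_num]; exact mul_ne_zero h3 (mul_ne_zero h3 h3)
  have hIJ : (z5 ^ 2) ^ 3 - J ^ 2 ≠ 0 := sub_ne_zero.mpr hΔ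
  have hzJ : z5 ^ 3 - J ≠ 0 := by
    intro h
    apply hIJ
    rw [show J = z5 ^ 3 from (sub_eq_zero.mp h).symm]
    ring
  have hJz : J - z5 ^ 3 ≠ 0 := by
    intro h; exact hzJ (by linear_combination -h)
  -- smoothness
  have hdisc : g2 ^ 3 - 27 * g3 ^ 2 ≠ 0 := by
    rw [hg2, hg3]
    have key : (3 * z5 * J + (15 / 4) * (z5 ^ 2) ^ 2) ^ 3 -
        27 * (-(11 * (z5 ^ 2) ^ 3 + 2 * J ^ 2 + 14 * z5 * J * z5 ^ 2) / 8) ^ 2 =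
        27 / 16 * (((z5 ^ 2) ^ 3 - J ^ 2) * (z5 ^ 3 - J) ^ 2) := by
      field_simp
      ring
    rw [key]
    exact mul_ne_zero (div_ne_zero h27 h16)
      (mul_ne_zero hIJ (pow_ne_zero 2 hzJ))
  refine ⟨hdisc, ?_⟩
  -- the Weierstrass curve
  set W : WeierstrassCurve.Affine F := auxW g2 g3 with hW
  have hWΔ : W.Δ ≠ 0 := by
    have : W.Δ = g2 ^ 3 - 27 * g3 ^ 2 := by
      simp only [hW, WeierstrassCurve.Δ, WeierstrassCurve.b₂, WeierstrassCurve.b₄,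
        WeierstrassCurve.b₆, WeierstrassCurve.b₈, auxW_a₁, auxW_a₂, auxW_a₃, auxW_a₄, auxW_a₆]
      field_simp
      ring
    rw [this]; exact hdisc
  set s : Set (F × F) := {p : F × F | p.2 ^ 2 = 4 * p.1 ^ 3 - g2 * p.1 - g3} with hs
  -- forward and backward membership
  have hmem : ∀ x y : F, W.Nonsingular x y → (x, 2 * y) ∈ s := by
    intro x y h
    have h1 := (W.equation_iff x y).mp h.1
    simp only [hW, auxW_a₁, auxW_a₂, auxW_a₃, auxW_a₄, auxW_a₆] at h1
    simp only [hs, Set.mem_setOf_eq]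
    field_simp at h1
    linear_combination h1
  have hns : ∀ p : F × F, p ∈ s → W.Nonsingular p.1 (p.2 / 2) := by
    intro p hp
    refine (W.equation_iff_nonsingular_of_Δ_ne_zero hWΔ).mp ?_
    rw [W.equation_iff]
    simp only [hW, auxW_a₁, auxW_a₂, auxW_a₃, auxW_a₄, auxW_a₆]
    simp only [hs, Set.mem_setOf_eq] at hp
    field_simp
    linear_combination 4 * hp
  -- the equivalence
  have e : W.Point ≃ Option s :=
    { toFun := fun P => match P with
        | .zero => none
        | @Point.some _ _ _ x y h => some ⟨(x, 2 * y), hmem x y h⟩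
      invFun := fun o => o.elim .zero fun q => .some _ _ (hns q.1 q.2)
      left_inv := by
        rintro (_ | @⟨x, y, h⟩)
        · rfl
        · exact auxW_some_congr rfl (mul_div_cancel_left₀ y h2)
      right_inv := by
        rintro (_ | ⟨⟨S, T⟩, hp⟩)
        · rfl
        · refine congrArg Option.some (Subtype.ext ?_)
          show (S, 2 * (T / 2)) = (S, T)
          rw [mul_comm, div_mul_cancel₀ _ h2] }
  -- the 3-torsion point
  have hy0 : ((J - z5 ^ 3) / 4 : F) ≠ W.negY (3 / 4 * z5 ^ 2) ((J - z5 ^ 3) / 4) := by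
    simp only [hW, WeierstrassCurve.Affine.negY, auxW_a₁, auxW_a₃]
    intro h
    apply hJz
    have h2y : (J - z5 ^ 3) * (2 / 4) = 0 := by linear_combination h
    rcases mul_eq_zero.mp h2y with h' | h'
    · exact h'
    · exact absurd h' (div_ne_zero h2 h4)
  have hEq : W.Equation (3 / 4 * z5 ^ 2) ((J - z5 ^ 3) / 4) := by
    rw [W.equation_iff]
    simp only [hW, auxW_a₁, auxW_a₂, auxW_a₃, auxW_a₄, auxW_a₆, hg2, hg3]
    field_simp
    linear_combination
  have hP : W.Nonsingular (3 / 4 * z5 ^ 2) ((J - z5 ^ 3) / 4) :=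
    (W.equation_iff_nonsingular_of_Δ_ne_zero hWΔ).mp hEq
  set P : W.Point := Point.some _ _ hP with hPdef
  -- doubling
  have hL := slope_of_Y_ne (W := W)
    (x₁ := 3 / 4 * z5 ^ 2) (y₁ := (J - z5 ^ 3) / 4) rfl hy0
  have hden : ((J - z5 ^ 3) / 4 : F) - W.negY (3 / 4 * z5 ^ 2) ((J - z5 ^ 3) / 4)
      = (J - z5 ^ 3) / 2 := by
    simp only [hW, WeierstrassCurve.Affine.negY, auxW_a₁, auxW_a₃]
    field_simp
    ring
  have hden2 : ((J - z5 ^ 3) / 2 : F) ≠ 0 := div_ne_zero hJz h2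
  rw [hden] at hL
  have haX : W.addX (3 / 4 * z5 ^ 2) (3 / 4 * z5 ^ 2)
      (W.slope (3 / 4 * z5 ^ 2) (3 / 4 * z5 ^ 2) ((J - z5 ^ 3) / 4) ((J - z5 ^ 3) / 4))
      = 3 / 4 * z5 ^ 2 := by
    rw [WeierstrassCurve.Affine.addX, hL]
    simp only [hW, auxW_a₁, auxW_a₂, auxW_a₄, hg2]
    have hD : (-(z5 ^ 3 * J * 524288) + z5 ^ 6 * 262144 + J ^ 2 * 262144 : F) ≠ 0 := by
      rw [show (-(z5 ^ 3 * J * 524288) + z5 ^ 6 * 262144 + J ^ 2 * 262144 : F)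
          = 262144 * (z5 ^ 3 - J) ^ 2 by ring]
      exact mul_ne_zero h262144 (pow_ne_zero _ hzJ)
    field_simp
    linear_combination
  have hbY : W.addY (3 / 4 * z5 ^ 2) (3 / 4 * z5 ^ 2) ((J - z5 ^ 3) / 4)
      (W.slope (3 / 4 * z5 ^ 2) (3 / 4 * z5 ^ 2) ((J - z5 ^ 3) / 4) ((J - z5 ^ 3) / 4))
      = W.negY (3 / 4 * z5 ^ 2) ((J - z5 ^ 3) / 4) := by
    rw [WeierstrassCurve.Affine.addY, WeierstrassCurve.Affine.negAddY, haX]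
    rw [show (W.slope (3 / 4 * z5 ^ 2) (3 / 4 * z5 ^ 2) ((J - z5 ^ 3) / 4) ((J - z5 ^ 3) / 4))
        * (3 / 4 * z5 ^ 2 - 3 / 4 * z5 ^ 2) + (J - z5 ^ 3) / 4 = (J - z5 ^ 3) / 4 by ring]
  have h2P : P + P = -P := by
    rw [hPdef, WeierstrassCurve.Affine.Point.add_self_of_Y_ne hy0,
      WeierstrassCurve.Affine.Point.neg_some]
    exact auxW_some_congr haX hbY
  have h3P : (3 : ℕ) • P = 0 := by
    rw [show (3 : ℕ) = 2 + 1 from rfl, add_nsmul, two_nsmul, one_nsmul, h2P, neg_add_cancel]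
  have hord : addOrderOf P = 3 := by
    have hdvd : addOrderOf P ∣ 3 := addOrderOf_dvd_of_nsmul_eq_zero h3P
    rcases (Nat.prime_three).eq_one_or_self_of_dvd _ hdvd with h1 | h1
    · exact absurd (AddMonoid.addOrderOf_eq_one_iff.mp h1) (some_ne_zero hP)
    · exact h1
  have hdvd3 : 3 ∣ Nat.card W.Point := hord ▸ addOrderOf_dvd_natCard P
  have hcard : Nat.card W.Point = 1 + s.ncard := by
    rw [Nat.card_congr e, Finite.card_option, Nat.card_coe_set_eq, add_comm]
  rwa [hcard] at hdvd3

/-- For `I, J, z₅ ∈ 𝔽_q` with `z₅² = I` and `I³ ≠ J²`, the curve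
`T² = 4S³ − g₂S − g₃` with `g₂ = 3z₅J + (15/4)I²` and
`g₃ = −(11I³ + 2J² + 14z₅JI)/8` is smooth (`g₂³ − 27g₃² ≠ 0`), and its number
of `𝔽_q`-rational points (affine points plus the single point at infinity of
the projective curve `T²U = 4S³ − g₂SU² − g₃U³`) is divisible by 3. -/
theorem elliptic_curve_count_div_three {F : Type*} [Field F] [Fintype F]
    (h2 : (2 : F) ≠ 0) (h3 : (3 : F) ≠ 0)
    (I J z5 : F) (hz : z5 ^ 2 = I) (hΔ : I ^ 3 ≠ J ^ 2) :
    let g2 : F := 3 * z5 * J + (15 / 4) * I ^ 2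
    let g3 : F := -(11 * I ^ 3 + 2 * J ^ 2 + 14 * z5 * J * I) / 8
    g2 ^ 3 - 27 * g3 ^ 2 ≠ 0 ∧
    3 ∣ 1 + Set.ncard {p : F × F | p.2 ^ 2 = 4 * p.1 ^ 3 - g2 * p.1 - g3} := by
  intro g2 g3
  subst hz
  exact auxW_main h2 h3 J z5 g2 g3 hΔ rfl rfl
end
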